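/- Cauchy product form of Bailey's second identity, odd part: for ρ ∈ ℂ with ρ, 2−ρ not nonpositive integers and every nonnegative integer k, ∑_{m=0}^{2k+1} (−1)^m / ((ρ)_{2k+1−m} (2−ρ)_m (2k+1−m)! m!) = (2(1−ρ)/(ρ(2−ρ))) · (−1)^k / (4^k (3/2)_k (ρ/2+1)_k (2−ρ/2)_k k!). -/

import Mathlib

/-!
The sum is the coefficient `c n` of `x ^ n`, `n = 2k+1`, in `₀F₁(; ρ; x) · ₀F₁(; 2 - ρ; -x)`.
These coefficients satisfy the two-term recurrence
`(n+1)(n+2)(ρ+n+1)(n+3-ρ) · c (n+2) + 4 · c n = 0` for every `n`; Zeilberger's algorithm finds it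
together with a certificate: a polynomial multiple `G n m` of the summand of `c (n+2)` such that the
recurrence, applied termwise, telescopes in `m`. The closed form satisfies the same recurrence along
odd `n` and agrees with `c 1 = 1/ρ - 1/(2-ρ)`, so induction on `k` finishes.
-/

noncomputable def poch (a : ℂ) (n : ℕ) : ℂ := (ascPochhammer ℂ n).eval a

open Finset

@[simp] lemma poch_zero (a : ℂ) : poch a 0 = 1 := by simp [poch]

lemma poch_succ (a : ℂ) (n : ℕ) : poch a (n + 1) = poch a n * (a + n) :=
  ascPochhammer_succ_eval n a

lemma add_natCast_ne_zero_of_ne_neg {a : ℂ} (ha : ∀ k : ℕ, a ≠ -k) (j : ℕ) : a + j ≠ 0 :=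
  fun h => ha j (eq_neg_of_add_eq_zero_left h)

noncomputable def coeff0F1 (a : ℂ) (j : ℕ) : ℂ := (poch a j * j.factorial)⁻¹

@[simp] lemma coeff0F1_zero (a : ℂ) : coeff0F1 a 0 = 1 := by simp [coeff0F1]

lemma coeff0F1_succ (a : ℂ) (j : ℕ) :
    coeff0F1 a (j + 1) = coeff0F1 a j / ((a + j) * (j + 1)) := by
  rw [coeff0F1, coeff0F1, div_eq_mul_inv, ← mul_inv, poch_succ, Nat.factorial_succ]
  push_cast
  ring

/-- The `m`-th term of the Cauchy product of `₀F₁(; ρ; x)` and `₀F₁(; 2 - ρ; -x)` at degree `n`. -/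
noncomputable def prodTerm (ρ : ℂ) (n m : ℕ) : ℂ :=
  coeff0F1 ρ (n - m) * ((-1) ^ m * coeff0F1 (2 - ρ) m)

noncomputable def productCoeff (ρ : ℂ) (n : ℕ) : ℂ := ∑ m ∈ range (n + 1), prodTerm ρ n m

lemma productCoeff_eq_sum (ρ : ℂ) (n : ℕ) :
    productCoeff ρ n = ∑ m ∈ range (n + 1), (-1 : ℂ) ^ m /
      (poch ρ (n - m) * poch (2 - ρ) m * (n - m).factorial * m.factorial) := by
  refine sum_congr rfl fun m _ => ?_
  simp only [prodTerm, coeff0F1]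
  ring

noncomputable def recFactor (ρ : ℂ) (n : ℕ) : ℂ := (n + 1) * (n + 2) * (ρ + n + 1) * (n + 3 - ρ)

/-- The certificate produced by Zeilberger's algorithm for the recurrence
`recFactor ρ n * productCoeff ρ (n + 2) + 4 * productCoeff ρ n = 0`. -/
noncomputable def zeilbergerCert (ρ : ℂ) (n m : ℕ) : ℂ :=
  (-2 * m ^ 4 + (4 * ρ + 6 * n + 6) * m ^ 3
      - (2 * ρ ^ 2 + (9 * n + 11) * ρ + 5 * n ^ 2 + 8 * n + 1) * m ^ 2
      + ((3 * n + 5) * ρ ^ 2 + (5 * n ^ 2 + 11 * n + 4) * ρ - (5 * n + 9) * (n + 1)) * m)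
    * prodTerm ρ (n + 2) m

noncomputable def oddClosedForm (ρ : ℂ) (k : ℕ) : ℂ :=
  2 * (1 - ρ) / (ρ * (2 - ρ)) * ((-1) ^ k /
    (4 ^ k * poch (3 / 2) k * poch (ρ / 2 + 1) k * poch (2 - ρ / 2) k * k.factorial))

lemma oddClosedForm_succ (ρ : ℂ) (k : ℕ) :
    oddClosedForm ρ (k + 1) =
      -oddClosedForm ρ k / (4 * (3 / 2 + k) * (ρ / 2 + 1 + k) * (2 - ρ / 2 + k) * (k + 1)) := by
  simp only [oddClosedForm, poch_succ, pow_succ, Nat.factorial_succ]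
  push_cast
  simp only [div_eq_mul_inv, mul_inv]
  ring

section

variable {ρ : ℂ} (hρ : ∀ k : ℕ, ρ ≠ -k) (hρ' : ∀ k : ℕ, 2 - ρ ≠ -k)
include hρ hρ'

lemma recFactor_ne_zero (n : ℕ) : recFactor ρ n ≠ 0 := by
  have h1 := add_natCast_ne_zero_of_ne_neg hρ (n + 1)
  have h2 := add_natCast_ne_zero_of_ne_neg hρ' (n + 1)
  have h3 : (n : ℂ) + 2 ≠ 0 := by exact_mod_cast Nat.succ_ne_zero (n + 1)
  push_cast at h1 h2
  refine mul_ne_zero (mul_ne_zero (mul_ne_zero (Nat.cast_add_one_ne_zero n) h3) ?_) ?_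
  · rwa [← add_assoc] at h1
  · contrapose! h2; linear_combination h2

lemma recFactor_mul_prodTerm_add {n m : ℕ} (hm : m ≤ n) :
    recFactor ρ n * prodTerm ρ (n + 2) m + 4 * prodTerm ρ n m =
      zeilbergerCert ρ n (m + 1) - zeilbergerCert ρ n m := by
  obtain ⟨a, rfl⟩ := Nat.exists_eq_add_of_le hm
  have h2 : m + a + 2 - m = a + 1 + 1 := by omega
  have h1 : m + a + 2 - (m + 1) = a + 1 := by omega
  simp only [recFactor, zeilbergerCert, prodTerm, h1, h2, Nat.add_sub_cancel_left, coeff0F1_succ,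
    pow_succ]
  have hA := add_natCast_ne_zero_of_ne_neg hρ a
  have hA1 := add_natCast_ne_zero_of_ne_neg hρ (a + 1)
  have hB := add_natCast_ne_zero_of_ne_neg hρ' m
  have ha1 : (a : ℂ) + 1 ≠ 0 := Nat.cast_add_one_ne_zero a
  have ha2 : (a : ℂ) + 1 + 1 ≠ 0 := by exact_mod_cast Nat.succ_ne_zero (a + 1)
  have hm1 : (m : ℂ) + 1 ≠ 0 := Nat.cast_add_one_ne_zero m
  push_cast at *
  field_simp
  ring

lemma zeilbergerCert_boundary (n : ℕ) :
    zeilbergerCert ρ n (n + 1)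
      + recFactor ρ n * (prodTerm ρ (n + 2) (n + 1) + prodTerm ρ (n + 2) (n + 2)) = 0 := by
  have h1 : n + 2 - (n + 1) = 0 + 1 := by omega
  simp only [recFactor, zeilbergerCert, prodTerm, h1, Nat.sub_self, coeff0F1_succ, coeff0F1_zero,
    pow_succ]
  have hA := add_natCast_ne_zero_of_ne_neg hρ 0
  have hB := add_natCast_ne_zero_of_ne_neg hρ' (n + 1)
  have hn : (n : ℂ) + 1 + 1 ≠ 0 := by exact_mod_cast Nat.succ_ne_zero (n + 1)
  push_cast at *
  field_simp
  ring

lemma productCoeff_recurrence (n : ℕ) :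
    recFactor ρ n * productCoeff ρ (n + 2) + 4 * productCoeff ρ n = 0 := by
  have htelescope :
      ∑ m ∈ range (n + 1), (recFactor ρ n * prodTerm ρ (n + 2) m + 4 * prodTerm ρ n m)
        = zeilbergerCert ρ n (n + 1) - zeilbergerCert ρ n 0 :=
    (sum_congr rfl fun m hm => recFactor_mul_prodTerm_add hρ hρ' (mem_range_succ_iff.mp hm)).trans
      (sum_range_sub _ _)
  have hcert_zero : zeilbergerCert ρ n 0 = 0 := by simp [zeilbergerCert]
  rw [sum_add_distrib, ← mul_sum, ← mul_sum] at htelescope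
  rw [productCoeff, productCoeff, sum_range_succ, sum_range_succ]
  linear_combination htelescope + zeilbergerCert_boundary hρ hρ' n - hcert_zero

lemma recFactor_mul_oddClosedForm_succ (k : ℕ) :
    recFactor ρ (2 * k + 1) * oddClosedForm ρ (k + 1) + 4 * oddClosedForm ρ k = 0 := by
  set E : ℂ := 4 * (3 / 2 + k) * (ρ / 2 + 1 + k) * (2 - ρ / 2 + k) * (k + 1) with hE_def
  have hrec : recFactor ρ (2 * k + 1) = 4 * E := by rw [recFactor, hE_def]; push_cast; ring
  have hE : E ≠ 0 := by
    have h1 := add_natCast_ne_zero_of_ne_neg hρ (2 * k + 2)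
    have h2 := add_natCast_ne_zero_of_ne_neg hρ' (2 * k + 2)
    have h3 : ((2 * k + 3 : ℕ) : ℂ) ≠ 0 := by exact_mod_cast Nat.succ_ne_zero (2 * k + 2)
    push_cast at h1 h2 h3
    refine mul_ne_zero (mul_ne_zero (mul_ne_zero (mul_ne_zero (by norm_num) ?_) ?_) ?_)
      (Nat.cast_add_one_ne_zero k)
    · contrapose! h3; linear_combination 2 * h3
    · contrapose! h1; linear_combination 2 * h1
    · contrapose! h2; linear_combination 2 * h2
  rw [oddClosedForm_succ, hrec, ← hE_def]
  field_simp
  ring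

lemma productCoeff_odd (k : ℕ) : productCoeff ρ (2 * k + 1) = oddClosedForm ρ k := by
  induction k with
  | zero =>
    have h0 := add_natCast_ne_zero_of_ne_neg hρ 0
    have h0' := add_natCast_ne_zero_of_ne_neg hρ' 0
    simp only [Nat.cast_zero, add_zero] at h0 h0'
    simp [productCoeff, oddClosedForm, sum_range_succ, prodTerm, coeff0F1_succ]
    field_simp
    ring
  | succ k ih =>
    refine mul_left_cancel₀ (recFactor_ne_zero hρ hρ' (2 * k + 1)) ?_
    linear_combination productCoeff_recurrence hρ hρ' (2 * k + 1) - 4 * ih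
      - recFactor_mul_oddClosedForm_succ hρ hρ' k

end

theorem stmt17_general (ρ : ℂ) (hρ : ∀ k : ℕ, ρ ≠ -(k : ℂ)) (hρ' : ∀ k : ℕ, 2 - ρ ≠ -(k : ℂ))
    (k : ℕ) :
    ∑ m ∈ Finset.range (2 * k + 2),
        (-1 : ℂ) ^ m /
          (poch ρ (2 * k + 1 - m) * poch (2 - ρ) m *
            (2 * k + 1 - m).factorial * m.factorial)
      = (2 * (1 - ρ) / (ρ * (2 - ρ))) * ((-1 : ℂ) ^ k /
          ((4 : ℂ) ^ k * poch (3 / 2) k * poch (ρ / 2 + 1) k * poch (2 - ρ / 2) k *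
            k.factorial)) :=
  (productCoeff_eq_sum ρ (2 * k + 1)).symm.trans (productCoeff_odd hρ hρ' k)

theorem stmt17 (ρ : ℂ) (hρ : ∀ k : ℕ, ρ ≠ -(k : ℂ)) (hρ' : ∀ k : ℕ, 2 - ρ ≠ -(k : ℂ))
    (h3 : ∀ k : ℕ, ρ / 2 + 1 ≠ -(k : ℂ)) (h4 : ∀ k : ℕ, 2 - ρ / 2 ≠ -(k : ℂ))
    (k : ℕ) :
    ∑ m ∈ Finset.range (2 * k + 2),
        (-1 : ℂ) ^ m /
          (poch ρ (2 * k + 1 - m) * poch (2 - ρ) m *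
            (2 * k + 1 - m).factorial * m.factorial)
      = (2 * (1 - ρ) / (ρ * (2 - ρ))) * ((-1 : ℂ) ^ k /
          ((4 : ℂ) ^ k * poch (3 / 2) k * poch (ρ / 2 + 1) k * poch (2 - ρ / 2) k *
            k.factorial)) :=
  stmt17_general ρ hρ hρ' k
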